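/- arXiv:2409.06276 — 3 statements merged into one kernel-verified Lean document; each statement's English description precedes it below -/
import Mathlib

section
/- Let h be integrable on [0,T] and Δ = T/M for a positive integer M. Then the Riemann-type sum Δ·∑_{i=1}^{M-1} |h(iΔ)| is bounded above by ∫_0^{T-Δ} |h(s) − h((s)_Δ + Δ)| ds + ∫_0^T |h(s)| ds, where (s)_Δ = ⌊s/Δ⌋·Δ. -/
/-!
On a grid cell `[kΔ, (k+1)Δ)` the function `s ↦ h((s)_Δ + Δ)` is the constant `h((k+1)Δ)`, so
`Δ |h((k+1)Δ)|` is its integral over the cell, which the triangle inequality bounds by the integrals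
of `|h - h((·)_Δ + Δ)|` and `|h|` over the cell. Summing over the `M - 1` cells that tile
`[0, T - Δ]` and enlarging the last integral to `[0, T]` gives the bound.
-/

open MeasureTheory Set intervalIntegral

theorem floor_div_eq_of_mem_Ico {Δ s : ℝ} (hΔ : 0 < Δ) {k : ℤ}
    (hs : s ∈ Ico (k * Δ) ((k + 1) * Δ)) :
    ⌊s / Δ⌋ = k := by
  rw [Int.floor_eq_iff, le_div_iff₀ hΔ, div_lt_iff₀ hΔ]
  exact hs

theorem eqOn_comp_floor_div_mul_add (f : ℝ → ℝ) {Δ : ℝ} (hΔ : 0 < Δ) (k : ℤ) :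
    EqOn (fun s => f (⌊s / Δ⌋ * Δ + Δ)) (fun _ => f ((k + 1) * Δ))
      (Ioo (k * Δ) ((k + 1) * Δ)) := by
  intro s hs
  simp only [floor_div_eq_of_mem_Ico hΔ (Ioo_subset_Ico_self hs), add_mul, one_mul]

theorem integral_comp_floor_div_mul_add (f : ℝ → ℝ) {Δ : ℝ} (hΔ : 0 < Δ) (k : ℤ) :
    ∫ s in k * Δ..(k + 1) * Δ, f (⌊s / Δ⌋ * Δ + Δ) = Δ * f ((k + 1) * Δ) := by
  have hle : k * Δ ≤ (k + 1) * Δ := by nlinarith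
  rw [integral_congr_uIoo (uIoo_of_le hle ▸ eqOn_comp_floor_div_mul_add f hΔ k),
    intervalIntegral.integral_const, smul_eq_mul]
  ring

theorem intervalIntegrable_comp_floor_div_mul_add (f : ℝ → ℝ) {Δ : ℝ} (hΔ : 0 < Δ) (k : ℤ) :
    IntervalIntegrable (fun s => f (⌊s / Δ⌋ * Δ + Δ)) volume (k * Δ) ((k + 1) * Δ) := by
  have hle : k * Δ ≤ (k + 1) * Δ := by nlinarith
  exact intervalIntegrable_const.congr_uIoo
    (uIoo_of_le hle ▸ (eqOn_comp_floor_div_mul_add f hΔ k).symm)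

theorem intervalIntegral_abs_le_abs_sub_add {μ : Measure ℝ} {f g : ℝ → ℝ} {a b : ℝ} (hab : a ≤ b)
    (hf : IntervalIntegrable f μ a b) (hg : IntervalIntegrable g μ a b) :
    ∫ x in a..b, |g x| ∂μ ≤ (∫ x in a..b, |f x - g x| ∂μ) + ∫ x in a..b, |f x| ∂μ := by
  rw [← integral_add (hf.sub hg).abs hf.abs]
  refine integral_mono_on hab hg.abs ((hf.sub hg).abs.add hf.abs) fun x _ => ?_
  linarith [abs_sub_abs_le_abs_sub (g x) (f x), abs_sub_comm (f x) (g x)]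

theorem mul_sum_abs_le_integral_abs_sub_step_add {Δ : ℝ} (hΔ : 0 < Δ) (N : ℕ) {h : ℝ → ℝ}
    (hint : IntervalIntegrable h volume 0 (N * Δ)) :
    Δ * ∑ k ∈ Finset.range N, |h ((k + 1) * Δ)| ≤
      (∫ s in 0..N * Δ, |h s - h (⌊s / Δ⌋ * Δ + Δ)|) + ∫ s in 0..N * Δ, |h s| := by
  have hpiece : ∀ k ∈ Finset.range N, IntervalIntegrable h volume (k * Δ) ((k + 1) * Δ) := by
    intro k hk
    have : (k : ℝ) + 1 ≤ N := by exact_mod_cast Finset.mem_range.mp hk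
    refine hint.mono_set (uIcc_subset_uIcc ?_ ?_) <;> rw [mem_uIcc] <;> left <;>
      constructor <;> nlinarith
  have hstep : ∀ k ∈ Finset.range N, IntervalIntegrable (fun s => h (⌊s / Δ⌋ * Δ + Δ)) volume
      (k * Δ) ((k + 1) * Δ) := fun k _ => by
    exact_mod_cast intervalIntegrable_comp_floor_div_mul_add h hΔ k
  have hcell : ∀ k : ℕ, Δ * |h ((k + 1) * Δ)| =
      ∫ s in k * Δ..(k + 1) * Δ, |h (⌊s / Δ⌋ * Δ + Δ)| := fun k => by
    exact_mod_cast (integral_comp_floor_div_mul_add (|h ·|) hΔ k).symm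
  have hadj : ∀ {f : ℝ → ℝ},
      (∀ k ∈ Finset.range N, IntervalIntegrable f volume (k * Δ) ((k + 1) * Δ)) →
      ∑ k ∈ Finset.range N, ∫ s in k * Δ..(k + 1) * Δ, f s = ∫ s in 0..N * Δ, f s := by
    intro f hf
    simpa using sum_integral_adjacent_intervals (a := fun k : ℕ => k * Δ) (by simpa using hf)
  calc Δ * ∑ k ∈ Finset.range N, |h ((k + 1) * Δ)|
      = ∑ k ∈ Finset.range N, ∫ s in k * Δ..(k + 1) * Δ, |h (⌊s / Δ⌋ * Δ + Δ)| := by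
        rw [Finset.mul_sum]; exact Finset.sum_congr rfl fun k _ => hcell k
    _ ≤ ∑ k ∈ Finset.range N, ((∫ s in k * Δ..(k + 1) * Δ, |h s - h (⌊s / Δ⌋ * Δ + Δ)|) +
          ∫ s in k * Δ..(k + 1) * Δ, |h s|) :=
        Finset.sum_le_sum fun k hk => intervalIntegral_abs_le_abs_sub_add (by nlinarith)
          (hpiece k hk) (hstep k hk)
    _ = _ := by
      rw [Finset.sum_add_distrib,
        hadj fun k hk => ((hpiece k hk).sub (hstep k hk)).abs, hadj fun k hk => (hpiece k hk).abs]

/-- For `h` integrable on `[0,T]` and `Δ = T/M`, the Riemann-type sum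
`Δ·∑_{i=1}^{M-1} |h(iΔ)|` is bounded by
`∫_0^{T-Δ} |h(s) − h((s)_Δ + Δ)| ds + ∫_0^T |h(s)| ds`, where `(s)_Δ = ⌊s/Δ⌋·Δ`. -/
theorem stmt0 (T : ℝ) (hT : 0 < T) (M : ℕ) (hM : 0 < M) (h : ℝ → ℝ)
    (hint : IntegrableOn h (Set.Icc 0 T)) :
    (T / M) * ∑ i ∈ Finset.Icc 1 (M - 1), |h (i * (T / M))| ≤
      (∫ s in (0:ℝ)..(T - T / M), |h s - h ((⌊s / (T / M)⌋ : ℝ) * (T / M) + T / M)|) +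
        ∫ s in (0:ℝ)..T, |h s| := by
  have hMpos : (0 : ℝ) < M := by exact_mod_cast hM
  set Δ := T / M with hΔ_def
  have hΔ : 0 < Δ := div_pos hT hMpos
  have hΔT : Δ ≤ T := div_le_self hT.le (by exact_mod_cast hM)
  have hgrid : ((M - 1 : ℕ) : ℝ) * Δ = T - Δ := by
    rw [Nat.cast_sub hM, Nat.cast_one, sub_mul, one_mul, hΔ_def, mul_div_cancel₀ _ hMpos.ne']
  have hintT : IntervalIntegrable h volume 0 T :=
    (intervalIntegrable_iff_integrableOn_Icc_of_le hT.le).2 hint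
  have hreindex : ∑ i ∈ Finset.Icc 1 (M - 1), |h (i * Δ)| =
      ∑ k ∈ Finset.range (M - 1), |h ((k + 1) * Δ)| := by
    rw [← Finset.Ico_add_one_right_eq_Icc, Finset.sum_Ico_eq_sum_range, Nat.add_sub_cancel]
    push_cast
    simp only [add_comm]
  have hintGrid : IntervalIntegrable h volume 0 (T - Δ) :=
    hintT.mono_set (uIcc_subset_uIcc_left (by rw [mem_uIcc]; left; constructor <;> linarith))
  calc Δ * ∑ i ∈ Finset.Icc 1 (M - 1), |h (i * Δ)|
      ≤ (∫ s in 0..T - Δ, |h s - h (⌊s / Δ⌋ * Δ + Δ)|) + ∫ s in 0..T - Δ, |h s| := by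
        rw [hreindex, ← hgrid]
        exact mul_sum_abs_le_integral_abs_sub_step_add hΔ _ (by rwa [hgrid])
    _ ≤ (∫ s in 0..T - Δ, |h s - h (⌊s / Δ⌋ * Δ + Δ)|) + ∫ s in 0..T, |h s| := by
        gcongr
        exact integral_mono_interval le_rfl (by linarith) (by linarith)
          (Filter.Eventually.of_forall fun s => abs_nonneg (h s)) hintT.abs
end

section
/- Let h : [0,T] → ℝ have finite p-variation for some p ≥ 1, and let 0 < ε ≤ Δ ≤ T. Then ∫_0^T |h((t+ε) ∧ T) − h(t)| dt ≤ K · ‖h‖_{p-var,T} · (T^{(p−1)/p} ε^{1/p} + ε) for a universal constant K independent of T, h, ε and Δ. -/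
open MeasureTheory

/-- The set of candidate values `(∑ |h(t_{i+1})−h(t_i)|^p)^{1/p}` over finite
partitions `0 = t_0 < t_1 < ... < t_n = T` of `[0,T]`. -/
def pVarSet (p T : ℝ) (h : ℝ → ℝ) : Set ℝ :=
  {v : ℝ | ∃ (n : ℕ) (t : ℕ → ℝ), 0 < n ∧ t 0 = 0 ∧ t n = T ∧
    (∀ i < n, t i < t (i + 1)) ∧
    v = (∑ i ∈ Finset.range n, |h (t (i + 1)) - h (t i)| ^ p) ^ (1 / p)}

/-- The `p`-variation seminorm of `h` on `[0,T]`. -/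
noncomputable def pVarNorm (p T : ℝ) (h : ℝ → ℝ) : ℝ := sSup (pVarSet p T h)

/-!
Extend the integrand by zero past `T` and cut `[0, Mε]`, `M = ⌈T/ε⌉`, into `M` translates of
`[0, ε]`: the integral becomes `∫₀^ε ∑_{k<M} |h(s + (k+1)ε) − h(s + kε)| ds`, all times clipped
at `T`. For each `s` the points `0, s, s + ε, …` clipped at `T` form a partition of `[0, T]`, so
Hölder's inequality bounds the inner sum by `M^{(p-1)/p} ‖h‖_{p-var}`. Finally
`⌈T/ε⌉^{(p-1)/p} ε ≤ T^{(p-1)/p} ε^{1/p} + ε`, so `K = 1` works.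
-/

open Finset

lemma sum_le_card_rpow_mul_sum_rpow {ι : Type*} (s : Finset ι) {f : ι → ℝ} {p : ℝ} (hp : 1 ≤ p)
    (hf : ∀ i ∈ s, 0 ≤ f i) :
    ∑ i ∈ s, f i ≤ (#s : ℝ) ^ ((p - 1) / p) * (∑ i ∈ s, f i ^ p) ^ (1 / p) := by
  have hp0 : 0 < p := by linarith
  have hsum : 0 ≤ ∑ i ∈ s, f i := sum_nonneg hf
  calc ∑ i ∈ s, f i = ((∑ i ∈ s, f i) ^ p) ^ (1 / p) := by
        rw [← Real.rpow_mul hsum, mul_one_div_cancel hp0.ne', Real.rpow_one]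
    _ ≤ ((#s : ℝ) ^ (p - 1) * ∑ i ∈ s, f i ^ p) ^ (1 / p) := by
        gcongr
        exact Real.rpow_sum_le_const_mul_sum_rpow_of_nonneg s hp hf
    _ = (#s : ℝ) ^ ((p - 1) / p) * (∑ i ∈ s, f i ^ p) ^ (1 / p) := by
        rw [Real.mul_rpow (by positivity) (sum_nonneg fun i hi => by have := hf i hi; positivity),
          ← Real.rpow_mul (by positivity), mul_one_div]

lemma ceil_div_rpow_mul_le {p T ε : ℝ} (hp : 1 ≤ p) (hT : 0 ≤ T) (hε : 0 < ε) :
    (⌈T / ε⌉₊ : ℝ) ^ ((p - 1) / p) * ε ≤ T ^ ((p - 1) / p) * ε ^ (1 / p) + ε := by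
  have hp0 : 0 < p := by linarith
  set θ := (p - 1) / p
  have hθ0 : 0 ≤ θ := div_nonneg (by linarith) hp0.le
  have hθ1 : θ ≤ 1 := (div_le_one hp0).2 (by linarith)
  have hε_pow : (T / ε) ^ θ * ε = T ^ θ * ε ^ (1 / p) := by
    have : 1 / p = 1 - θ := by simp only [θ]; field_simp; ring
    rw [Real.div_rpow hT hε.le, this, Real.rpow_sub hε, Real.rpow_one]
    field_simp
  calc (⌈T / ε⌉₊ : ℝ) ^ θ * ε ≤ (T / ε + 1) ^ θ * ε := by
        gcongr
        exact (Nat.ceil_lt_add_one (by positivity)).le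
    _ ≤ ((T / ε) ^ θ + 1 ^ θ) * ε := by
        gcongr
        exact Real.rpow_add_le_add_rpow (by positivity) zero_le_one hθ0 hθ1
    _ = T ^ θ * ε ^ (1 / p) + ε := by rw [Real.one_rpow, add_mul, one_mul, hε_pow]

lemma pVarNorm_nonneg {p T : ℝ} {h : ℝ → ℝ} (hT : 0 < T) (hbdd : BddAbove (pVarSet p T h)) :
    0 ≤ pVarNorm p T h := by
  have hmem : (∑ i ∈ range 1, |h (T * (i + 1 : ℕ)) - h (T * i)| ^ p) ^ (1 / p) ∈ pVarSet p T h :=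
    ⟨1, fun i => T * i, one_pos, by simp, by simp, by simpa using hT, rfl⟩
  exact (by positivity : (0 : ℝ) ≤ _).trans (le_csSup hbdd hmem)

def clippedGrid (s ε T : ℝ) : ℕ → ℝ
  | 0 => 0
  | k + 1 => min (s + k * ε) T

section clippedGrid

variable {s ε T : ℝ}

lemma lt_ceil_sub_div_iff (hε : 0 < ε) {k : ℕ} : k < ⌈(T - s) / ε⌉₊ ↔ s + k * ε < T := by
  rw [Nat.lt_ceil, lt_div_iff₀ hε]
  constructor <;> intro <;> linarith

lemma clippedGrid_succ_of_le (hε : 0 < ε) {k : ℕ} (hk : ⌈(T - s) / ε⌉₊ ≤ k) :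
    clippedGrid s ε T (k + 1) = T :=
  min_eq_right (not_lt.1 fun h => (lt_ceil_sub_div_iff hε).2 h |>.not_ge hk)

lemma clippedGrid_lt_succ (hs : 0 < s) (hT : 0 < T) (hε : 0 < ε) {i : ℕ}
    (hi : i < ⌈(T - s) / ε⌉₊ + 1) : clippedGrid s ε T i < clippedGrid s ε T (i + 1) := by
  cases i with
  | zero => simpa [clippedGrid] using ⟨hs, hT⟩
  | succ k =>
    have hk : s + k * ε < T := (lt_ceil_sub_div_iff hε).1 (by omega)
    simp only [clippedGrid, min_eq_left hk.le, Nat.cast_succ]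
    exact lt_min (by nlinarith) hk

lemma sum_clippedGrid_rpow_mem_pVarSet (p : ℝ) (h : ℝ → ℝ) (hs : 0 < s) (hT : 0 < T)
    (hε : 0 < ε) :
    (∑ i ∈ range (⌈(T - s) / ε⌉₊ + 1),
        |h (clippedGrid s ε T (i + 1)) - h (clippedGrid s ε T i)| ^ p) ^ (1 / p) ∈
      pVarSet p T h :=
  ⟨_, clippedGrid s ε T, Nat.succ_pos _, rfl, clippedGrid_succ_of_le hε le_rfl,
    fun _ hi => clippedGrid_lt_succ hs hT hε hi, rfl⟩

lemma sum_clipped_increments_rpow_le_pVarNorm {p : ℝ} {h : ℝ → ℝ} (hp : 0 < p)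
    (hbdd : BddAbove (pVarSet p T h)) (hs : 0 < s) (hT : 0 < T) (hε : 0 < ε) (M : ℕ) :
    (∑ k ∈ range M, |h (min (s + k * ε + ε) T) - h (min (s + k * ε) T)| ^ p) ^ (1 / p) ≤
      pVarNorm p T h := by
  set j := ⌈(T - s) / ε⌉₊
  set g : ℕ → ℝ := fun i => |h (clippedGrid s ε T (i + 1)) - h (clippedGrid s ε T i)| ^ p
  have hg : ∀ i, 0 ≤ g i := fun i => by positivity
  have hterm : ∀ k : ℕ,
      |h (min (s + k * ε + ε) T) - h (min (s + k * ε) T)| ^ p = g (k + 1) := by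
    intro k
    simp only [g, clippedGrid, Nat.cast_succ, add_mul, one_mul, add_assoc]
  have htail : ∀ k ∉ range j, g (k + 1) = 0 := fun k hk => by
    have hk : j ≤ k := by simpa using hk
    simp only [g, clippedGrid_succ_of_le hε hk, clippedGrid_succ_of_le hε (hk.trans k.le_succ),
      sub_self, abs_zero, Real.zero_rpow hp.ne']
  have hsum : ∑ k ∈ range M, g (k + 1) ≤ ∑ i ∈ range (j + 1), g i :=
    calc ∑ k ∈ range M, g (k + 1) ≤ ∑ k ∈ range (max M j), g (k + 1) :=
          sum_le_sum_of_subset_of_nonneg (range_subset_range.2 (le_max_left _ _))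
            fun k _ _ => hg _
      _ = ∑ k ∈ range j, g (k + 1) :=
          (sum_subset (range_subset_range.2 (le_max_right _ _)) fun k _ => htail k).symm
      _ ≤ ∑ i ∈ range (j + 1), g i := by
          rw [sum_range_succ']
          exact le_add_of_nonneg_right (hg 0)
  simp only [hterm]
  exact (Real.rpow_le_rpow (sum_nonneg fun k _ => hg _) hsum (by positivity)).trans
    (le_csSup hbdd (sum_clippedGrid_rpow_mem_pVarSet p h hs hT hε))

lemma sum_clipped_increments_le {p : ℝ} {h : ℝ → ℝ} (hp : 1 ≤ p)
    (hbdd : BddAbove (pVarSet p T h)) (hs : 0 < s) (hT : 0 < T) (hε : 0 < ε) (M : ℕ) :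
    ∑ k ∈ range M, |h (min (s + k * ε + ε) T) - h (min (s + k * ε) T)| ≤
      M ^ ((p - 1) / p) * pVarNorm p T h := by
  refine (sum_le_card_rpow_mul_sum_rpow _ hp fun _ _ => abs_nonneg _).trans ?_
  rw [card_range]
  gcongr
  exact sum_clipped_increments_rpow_le_pVarNorm (by linarith) hbdd hs hT hε M

end clippedGrid

theorem intervalIntegral.integral_eq_integral_sum_comp_add_mul {E : Type*}
    [NormedAddCommGroup E] [NormedSpace ℝ E] {f : ℝ → E} {ε : ℝ} (hε : 0 ≤ ε) {M : ℕ}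
    (hf : IntervalIntegrable f volume 0 (M * ε)) :
    ∫ u in 0..M * ε, f u = ∫ s in 0..ε, ∑ k ∈ range M, f (s + k * ε) := by
  have hpiece : ∀ k < M, IntervalIntegrable f volume (k * ε) ((k + 1 : ℕ) * ε) := by
    intro k hk
    have hk' : (k + 1 : ℝ) ≤ M := by exact_mod_cast hk
    refine hf.mono_set (Set.uIcc_subset_uIcc ?_ ?_) <;>
      rw [Set.uIcc_of_le (by positivity)] <;> push_cast <;>
      exact ⟨by positivity, by nlinarith⟩
  have hshift : ∀ k : ℕ, ∫ u in k * ε..(k + 1 : ℕ) * ε, f u = ∫ s in 0..ε, f (s + k * ε) := by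
    intro k
    rw [intervalIntegral.integral_comp_add_right]
    push_cast
    ring_nf
  rw [intervalIntegral.integral_finsetSum fun k hk => ?_]
  · have hsplit := intervalIntegral.sum_integral_adjacent_intervals (a := fun k : ℕ => k * ε) hpiece
    simp only [Nat.cast_zero, zero_mul] at hsplit
    rw [← hsplit]
    exact sum_congr rfl fun k _ => hshift k
  · convert (hpiece k (mem_range.1 hk)).comp_add_right (k * ε) using 1 <;> push_cast <;> ring

theorem intervalIntegral.integral_eq_of_eqOn_zero_right {E : Type*} [NormedAddCommGroup E]
    [NormedSpace ℝ E] {f : ℝ → E} {a b c : ℝ} (hbc : b ≤ c) (hf : Set.EqOn f 0 (Set.Icc b c))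
    (hab : IntervalIntegrable f volume a b) :
    IntervalIntegrable f volume a c ∧ ∫ u in a..c, f u = ∫ u in a..b, f u := by
  have hf' : Set.EqOn f 0 (Set.uIcc b c) := Set.uIcc_of_le hbc ▸ hf
  have hbc_int : IntervalIntegrable f volume b c :=
    (intervalIntegrable_const (c := (0 : E))).congr fun u hu =>
      (hf' (Set.uIoc_subset_uIcc hu)).symm
  refine ⟨hab.trans hbc_int, ?_⟩
  rw [← intervalIntegral.integral_add_adjacent_intervals hab hbc_int,
    intervalIntegral.integral_congr hf']
  simp only [Pi.zero_apply, intervalIntegral.integral_zero, add_zero]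

/-- if `h` has finite `p`-variation on `[0,T]` (`p ≥ 1`) and
`0 < ε ≤ Δ ≤ T`, then `∫_0^T |h((t+ε) ∧ T) − h(t)| dt
  ≤ K·‖h‖_{p-var,T}·(T^{(p−1)/p} ε^{1/p} + ε)` for a universal constant `K`
independent of `T`, `h`, `ε` and `Δ`. -/
theorem stmt1 :
    ∃ K > (0:ℝ), ∀ (p T ε Δ : ℝ) (h : ℝ → ℝ), 1 ≤ p → 0 < T → 0 < ε → ε ≤ Δ → Δ ≤ T →
      BddAbove (pVarSet p T h) →
      (∫ t in (0:ℝ)..T, |h (min (t + ε) T) - h t|) ≤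
        K * pVarNorm p T h * (T ^ ((p - 1) / p) * ε ^ (1 / p) + ε) := by
  refine ⟨1, one_pos, fun p T ε Δ h hp hT hε _ _ hbdd => ?_⟩
  set f : ℝ → ℝ := fun u => |h (min (u + ε) T) - h (min u T)|
  set M := ⌈T / ε⌉₊
  have hN := pVarNorm_nonneg hT hbdd
  have hMε : T ≤ M * ε := (div_le_iff₀ hε).1 (Nat.le_ceil _)
  have hf_tail : Set.EqOn f 0 (Set.Icc T (M * ε)) := fun u hu => by
    simp [f, min_eq_right hu.1, min_eq_right (by linarith [hu.1] : T ≤ u + ε)]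
  have hbound : ∀ s ∈ Set.uIoc 0 ε,
      ‖∑ k ∈ range M, f (s + k * ε)‖ ≤ M ^ ((p - 1) / p) * pVarNorm p T h := fun s hs => by
    rw [Real.norm_of_nonneg (sum_nonneg fun _ _ => abs_nonneg _)]
    exact sum_clipped_increments_le hp hbdd (Set.uIoc_of_le hε.le ▸ hs).1 hT hε M
  rw [intervalIntegral.integral_congr (g := f) fun u hu => by
    simp [f, min_eq_left (Set.uIcc_of_le hT.le ▸ hu).2], one_mul]
  by_cases hf : IntervalIntegrable f volume 0 T
  · obtain ⟨hfM, hf_extend⟩ := intervalIntegral.integral_eq_of_eqOn_zero_right hMε hf_tail hf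
    calc ∫ u in 0..T, f u = ∫ u in 0..M * ε, f u := hf_extend.symm
      _ = ∫ s in 0..ε, ∑ k ∈ range M, f (s + k * ε) :=
          intervalIntegral.integral_eq_integral_sum_comp_add_mul hε.le hfM
      _ ≤ M ^ ((p - 1) / p) * pVarNorm p T h * |ε - 0| :=
          (Real.le_norm_self _).trans (intervalIntegral.norm_integral_le_of_norm_le_const hbound)
      _ ≤ pVarNorm p T h * (T ^ ((p - 1) / p) * ε ^ (1 / p) + ε) := by
          rw [sub_zero, abs_of_pos hε, mul_comm _ (pVarNorm p T h), mul_assoc]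
          exact mul_le_mul_of_nonneg_left (ceil_div_rpow_mul_le hp hT.le hε) hN
  · rw [intervalIntegral.integral_undef hf]
    positivity
end

section
/- Let f : [0,∞) → [0,∞) be measurable and locally bounded, a ∈ L¹([0,∞)) nonnegative with ‖a‖_1 < 1, and C ≥ 0. If f(t) ≤ C + ∫_0^t a(t−s) f(s) ds for all t ≥ 0, then f(t) ≤ C/(1 − ‖a‖_1) for all t ≥ 0. -/
/-!
Let `A = ∫ a < 1` and `K = C / (1 - A)`, the fixed point of `D ↦ C + A * D`. If `f ≤ D` on
`[0, T]`, the inequality gives `f ≤ C + A * D` there, since the convolution is at most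
`(∫₀ᵗ a) * D`. Starting from a local bound `B ≤ K + r`, iteration gives `f ≤ K + Aⁿ * r` on
`[0, T]` for every `n`, and `Aⁿ → 0`.
-/

open MeasureTheory Filter Set

lemma le_of_forall_le_add_mul_pow {x K A r : ℝ} (hA0 : 0 ≤ A) (hA1 : A < 1)
    (h : ∀ n : ℕ, x ≤ K + A ^ n * r) : x ≤ K := by
  have hlim : Tendsto (fun n : ℕ => K + A ^ n * r) atTop (nhds K) := by
    simpa using ((tendsto_pow_atTop_nhds_zero_of_lt_one hA0 hA1).mul_const r).const_add K
  exact ge_of_tendsto' hlim h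

lemma add_mul_div_one_sub_add_mul_pow {C A : ℝ} (hA1 : A ≠ 1) (r : ℝ) (n : ℕ) :
    C + A * (C / (1 - A) + A ^ n * r) = C / (1 - A) + A ^ (n + 1) * r := by
  have : 1 - A ≠ 0 := sub_ne_zero.mpr hA1.symm
  field_simp
  ring

section Renewal

variable {a : ℝ → ℝ}

lemma intervalIntegral_le_setIntegral_Ici (ha0 : ∀ t, 0 ≤ a t)
    (ha : IntegrableOn a (Ici 0)) {t : ℝ} (ht : 0 ≤ t) :
    ∫ u in (0:ℝ)..t, a u ≤ ∫ u in Ici (0:ℝ), a u := by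
  rw [intervalIntegral.integral_of_le ht]
  exact setIntegral_mono_set ha (Eventually.of_forall fun x => ha0 x)
    (Eventually.of_forall fun _ hx => le_of_lt hx.1)

/-- No integrability of `s ↦ a (t - s) * f s` is needed: where it fails, the integral is `0`. -/
lemma intervalIntegral_mul_sub_le (ha0 : ∀ t, 0 ≤ a t) (ha : IntegrableOn a (Ici 0))
    {f : ℝ → ℝ} {t D : ℝ} (ht : 0 ≤ t) (hD : 0 ≤ D) (hf : ∀ s ∈ Icc 0 t, f s ≤ D) :
    ∫ s in (0:ℝ)..t, a (t - s) * f s ≤ (∫ u in Ici (0:ℝ), a u) * D := by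
  have ha_t : IntervalIntegrable (fun s => a (t - s)) volume 0 t := by
    have hIoc : IntervalIntegrable a volume 0 t :=
      (intervalIntegrable_iff_integrableOn_Ioc_of_le ht).2
        (ha.mono_set (Ioc_subset_Ioi_self.trans Ioi_subset_Ici_self))
    simpa using (hIoc.comp_sub_left t).symm
  calc ∫ s in (0:ℝ)..t, a (t - s) * f s
      ≤ ∫ s in (0:ℝ)..t, a (t - s) * D := by
        by_cases hint : IntervalIntegrable (fun s => a (t - s) * f s) volume 0 t
        · exact intervalIntegral.integral_mono_on ht hint (ha_t.mul_const D)
            fun s hs => mul_le_mul_of_nonneg_left (hf s hs) (ha0 _)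
        · rw [intervalIntegral.integral_undef hint]
          exact intervalIntegral.integral_nonneg ht fun s _ => mul_nonneg (ha0 _) hD
    _ = (∫ u in (0:ℝ)..t, a u) * D := by
        rw [intervalIntegral.integral_mul_const, intervalIntegral.integral_comp_sub_left]
        simp
    _ ≤ (∫ u in Ici (0:ℝ), a u) * D :=
        mul_le_mul_of_nonneg_right (intervalIntegral_le_setIntegral_Ici ha0 ha ht) hD

variable {C : ℝ} {f : ℝ → ℝ}

lemma le_add_mul_on_Icc_of_renewal (ha0 : ∀ t, 0 ≤ a t) (ha : IntegrableOn a (Ici 0))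
    (hrec : ∀ t ≥ (0:ℝ), f t ≤ C + ∫ s in (0:ℝ)..t, a (t - s) * f s)
    {T D : ℝ} (hD : 0 ≤ D) (hf : ∀ s ∈ Icc 0 T, f s ≤ D) :
    ∀ t ∈ Icc 0 T, f t ≤ C + (∫ u in Ici (0:ℝ), a u) * D := fun t ht =>
  (hrec t ht.1).trans <| add_le_add_right (intervalIntegral_mul_sub_le ha0 ha ht.1 hD
    fun s hs => hf s ⟨hs.1, hs.2.trans ht.2⟩) C

lemma le_on_Icc_of_renewal (hC : 0 ≤ C) (ha0 : ∀ t, 0 ≤ a t) (ha : IntegrableOn a (Ici 0))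
    (ha1 : ∫ s in Ici (0:ℝ), a s < 1)
    (hrec : ∀ t ≥ (0:ℝ), f t ≤ C + ∫ s in (0:ℝ)..t, a (t - s) * f s)
    {T B : ℝ} (hB : ∀ s ∈ Icc 0 T, f s ≤ B) :
    ∀ t ∈ Icc 0 T, f t ≤ C / (1 - ∫ s in Ici (0:ℝ), a s) := by
  set A := ∫ s in Ici (0:ℝ), a s
  have hA0 : 0 ≤ A := setIntegral_nonneg measurableSet_Ici fun x _ => ha0 x
  have hK0 : 0 ≤ C / (1 - A) := div_nonneg hC (by linarith)
  set r := max (B - C / (1 - A)) 0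
  have hbound : ∀ n : ℕ, ∀ t ∈ Icc 0 T, f t ≤ C / (1 - A) + A ^ n * r := by
    intro n
    induction n with
    | zero =>
      intro t ht
      simpa using (hB t ht).trans (by linarith [le_max_left (B - C / (1 - A)) 0])
    | succ n ih =>
      rw [← add_mul_div_one_sub_add_mul_pow ha1.ne]
      exact le_add_mul_on_Icc_of_renewal ha0 ha hrec
        (add_nonneg hK0 (mul_nonneg (pow_nonneg hA0 n) (le_max_right _ _))) ih
  exact fun t ht => le_of_forall_le_add_mul_pow hA0 ha1 fun n => hbound n t ht

end Renewal

theorem stmt6_general (C : ℝ) (hC : 0 ≤ C) (a f : ℝ → ℝ)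
    (ha0 : ∀ t, 0 ≤ a t) (haint : IntegrableOn a (Set.Ici 0))
    (ha1 : (∫ s in Set.Ici (0:ℝ), a s) < 1)
    (hfb : ∀ T > (0:ℝ), ∃ B, ∀ t ∈ Set.Icc (0:ℝ) T, f t ≤ B)
    (hrec : ∀ t ≥ (0:ℝ), f t ≤ C + ∫ s in (0:ℝ)..t, a (t - s) * f s) :
    ∀ t ≥ (0:ℝ), f t ≤ C / (1 - ∫ s in Set.Ici (0:ℝ), a s) := by
  intro t ht
  obtain ⟨B, hB⟩ := hfb (t + 1) (by linarith)
  exact le_on_Icc_of_renewal hC ha0 haint ha1 hrec hB t ⟨ht, by linarith⟩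

/-- convolution renewal inequality. If `f ≥ 0` is measurable and
locally bounded, `a ≥ 0` is integrable on `[0,∞)` with `∫ a < 1`, `C ≥ 0`, and
`f(t) ≤ C + ∫_0^t a(t−s) f(s) ds` for all `t ≥ 0`, then
`f(t) ≤ C/(1 − ‖a‖₁)` for all `t ≥ 0`. -/
theorem stmt6 (C : ℝ) (hC : 0 ≤ C) (a f : ℝ → ℝ)
    (ha0 : ∀ t, 0 ≤ a t) (haint : IntegrableOn a (Set.Ici 0))
    (ha1 : (∫ s in Set.Ici (0:ℝ), a s) < 1)
    (hf0 : ∀ t, 0 ≤ f t) (hfm : Measurable f)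
    (hfb : ∀ T > (0:ℝ), ∃ B, ∀ t ∈ Set.Icc (0:ℝ) T, f t ≤ B)
    (hrec : ∀ t ≥ (0:ℝ), f t ≤ C + ∫ s in (0:ℝ)..t, a (t - s) * f s) :
    ∀ t ≥ (0:ℝ), f t ≤ C / (1 - ∫ s in Set.Ici (0:ℝ), a s) :=
  stmt6_general C hC a f ha0 haint ha1 hfb hrec
end
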